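/- arXiv:1307.0684 — 4 statements merged into one kernel-verified Lean document; each statement's English description precedes it below -/
import Mathlib

section
/- Let X be a real-valued random variable with E[X]=0 and variance σ²>0, and let α∈(0,1). Then ES_α(X) ≤ (σ/α)·(√(α-α²) + arctan(√((1-α)/α))). -/
open MeasureTheory ProbabilityTheory

/-- The lower quantile of order `α` of a random variable `X`:
`q_α(X) = inf {x : P(X ≤ x) ≥ α}`. -/
noncomputable def lowerQuantile {Ω : Type*} [MeasureSpace Ω] (X : Ω → ℝ) (α : ℝ) : ℝ :=
  sInf {x : ℝ | α ≤ (ℙ {ω | X ω ≤ x}).toReal}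

/-- The Value-at-Risk of order `α` : `VaR_α(X) = -q_α(X)`. -/
noncomputable def VaR {Ω : Type*} [MeasureSpace Ω] (X : Ω → ℝ) (α : ℝ) : ℝ :=
  - lowerQuantile X α

/-- The Expected Shortfall of order `α` : `ES_α(X) = (1/α) ∫₀^α VaR_u(X) du`. -/
noncomputable def ES {Ω : Type*} [MeasureSpace Ω] (X : Ω → ℝ) (α : ℝ) : ℝ :=
  (1 / α) * ∫ u in (0 : ℝ)..α, VaR X u

/-!
Rockafellar–Uryasev: for every threshold `c`, `α · ES_α(X) ≤ α c + E[(-X - c)⁺]`, because the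
level sets of `u ↦ VaR_u(X)` on `(0, α]` are no larger than the matching tail probabilities of
`-X`. Writing `(-X - c)⁺ = ((-X - c) + |-X - c|) / 2` and `E|-X - c| ≤ √(σ² + c²)` bounds the
right-hand side by `α c + (√(σ² + c²) - c) / 2`, whose minimum over `c` is `σ √(α - α²)`.
This is already below the claimed bound, the arctan term being nonnegative.
-/

open Set

theorem integral_le_integral_of_measure_lt_le {α β : Type*} [MeasurableSpace α]
    [MeasurableSpace β] {μ : Measure α} {ν : Measure β} {f : α → ℝ} {g : β → ℝ}
    (hf : AEMeasurable f μ) (hf_nn : 0 ≤ᵐ[μ] f) (hg : Integrable g ν) (hg_nn : 0 ≤ᵐ[ν] g)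
    (h : ∀ t > 0, μ {a | t < f a} ≤ ν {b | t < g b}) :
    ∫ a, f a ∂μ ≤ ∫ b, g b ∂ν := by
  rw [integral_eq_lintegral_of_nonneg_ae hf_nn hf.aestronglyMeasurable,
    integral_eq_lintegral_of_nonneg_ae hg_nn hg.aestronglyMeasurable]
  refine ENNReal.toReal_mono hg.lintegral_lt_top.ne ?_
  rw [lintegral_eq_lintegral_meas_lt μ hf_nn hf,
    lintegral_eq_lintegral_meas_lt ν hg_nn hg.1.aemeasurable]
  exact setLIntegral_mono' measurableSet_Ioi h

theorem integral_abs_le_sqrt_integral_sq {Ω : Type*} [MeasurableSpace Ω] {μ : Measure Ω}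
    [IsProbabilityMeasure μ] {Z : Ω → ℝ} (hZ : MemLp Z 2 μ) :
    ∫ ω, |Z ω| ∂μ ≤ √(∫ ω, Z ω ^ 2 ∂μ) := by
  have hvar := variance_nonneg (fun ω => |Z ω|) μ
  rw [variance_eq_sub (by simpa [Real.norm_eq_abs] using hZ.norm)] at hvar
  simp only [Pi.pow_apply, sq_abs] at hvar
  exact Real.le_sqrt_of_sq_le (by linarith)

theorem integral_max_zero_le {Ω : Type*} [MeasurableSpace Ω] {μ : Measure Ω}
    [IsProbabilityMeasure μ] {Z : Ω → ℝ} (hZ : MemLp Z 2 μ) :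
    ∫ ω, max (Z ω) 0 ∂μ ≤ (∫ ω, Z ω ∂μ + √(∫ ω, Z ω ^ 2 ∂μ)) / 2 := by
  have hZint : Integrable Z μ := hZ.integrable one_le_two
  have hpos : ∀ ω, max (Z ω) 0 = (Z ω + |Z ω|) / 2 := fun ω => by
    rcases le_total 0 (Z ω) with h | h
    · rw [max_eq_left h, abs_of_nonneg h]; ring
    · rw [max_eq_right h, abs_of_nonpos h]; ring
  simp_rw [hpos]
  rw [integral_div, integral_add hZint hZint.abs]
  linarith [integral_abs_le_sqrt_integral_sq hZ]

theorem exists_mul_add_sqrt_sub_eq {σ α : ℝ} (hσ : 0 ≤ σ) (hα : α ∈ Ioo 0 1) :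
    ∃ c : ℝ, α * c + (√(σ ^ 2 + c ^ 2) - c) / 2 = σ * √(α - α ^ 2) := by
  have hs : 0 < √(α - α ^ 2) := Real.sqrt_pos.mpr (by nlinarith [hα.1, hα.2])
  have hs2 : √(α - α ^ 2) ^ 2 = α - α ^ 2 := Real.sq_sqrt (by nlinarith [hα.1, hα.2])
  set s := √(α - α ^ 2)
  -- the minimiser of `c ↦ α * c + (√(σ ^ 2 + c ^ 2) - c) / 2`
  refine ⟨σ * (1 - 2 * α) / (2 * s), ?_⟩
  have hroot : √(σ ^ 2 + (σ * (1 - 2 * α) / (2 * s)) ^ 2) = σ / (2 * s) := by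
    rw [Real.sqrt_eq_iff_eq_sq (by positivity) (by positivity)]
    field_simp
    linear_combination (4 * σ ^ 2) * hs2
  rw [hroot]
  field_simp
  linear_combination (-4 * σ) * hs2

section Quantile

variable {Ω : Type*} [MeasureSpace Ω] [IsProbabilityMeasure (ℙ : Measure Ω)] (X : Ω → ℝ)

theorem nonempty_setOf_le_measure_le {u : ℝ} (hu : u < 1) :
    {x : ℝ | u ≤ (ℙ {ω | X ω ≤ x}).toReal}.Nonempty := by
  have hmono : Monotone fun n : ℕ => {ω | X ω ≤ n} := fun m n hmn ω (h : X ω ≤ m) =>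
    h.trans (Nat.cast_le.mpr hmn)
  have hunion : ⋃ n : ℕ, {ω | X ω ≤ n} = univ :=
    eq_univ_of_forall fun ω => mem_iUnion.mpr ⟨⌈X ω⌉₊, Nat.le_ceil (X ω)⟩
  have htend := tendsto_measure_iUnion_atTop (μ := ℙ) hmono
  rw [hunion, measure_univ] at htend
  obtain ⟨n, hn⟩ := (htend.eventually_const_lt (ENNReal.ofReal_lt_one.mpr hu)).exists
  refine ⟨n, ?_⟩
  calc u ≤ (ENNReal.ofReal u).toReal := ENNReal.toReal_ofReal' ▸ le_max_left u 0
    _ ≤ _ := ENNReal.toReal_mono (measure_ne_top _ _) hn.le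

theorem volume_setOf_lt_VaR_inter_Ioc_le {α : ℝ} (hα : α < 1) (y : ℝ) :
    volume ({u | y < VaR X u} ∩ Ioc 0 α) ≤ ℙ {ω | X ω < -y} := by
  have hsub : {u | y < VaR X u} ∩ Ioc 0 α ⊆ Ioc 0 (ℙ {ω | X ω < -y}).toReal := by
    rintro u ⟨hyu : y < -lowerQuantile X u, hu⟩
    obtain ⟨x, hux, hxy⟩ := exists_lt_of_csInf_lt
      (nonempty_setOf_le_measure_le X (hu.2.trans_lt hα)) (lt_neg_of_lt_neg hyu)
    refine ⟨hu.1, hux.trans (ENNReal.toReal_mono (measure_ne_top _ _) (measure_mono ?_))⟩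
    exact fun ω (hω : X ω ≤ x) => hω.trans_lt hxy
  calc volume ({u | y < VaR X u} ∩ Ioc 0 α)
      ≤ volume (Ioc 0 (ℙ {ω | X ω < -y}).toReal) := measure_mono hsub
    _ = ℙ {ω | X ω < -y} := by
      rw [Real.volume_Ioc, sub_zero, ENNReal.ofReal_toReal (measure_ne_top _ _)]

theorem integral_VaR_le_mul_add_integral_max {α : ℝ} (hα0 : 0 ≤ α) (hα1 : α < 1)
    (hVaR : IntervalIntegrable (VaR X) volume 0 α) (hX : Integrable X ℙ) (c : ℝ) :
    ∫ u in (0 : ℝ)..α, VaR X u ≤ α * c + ∫ ω, max (-X ω - c) 0 := by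
  have hexcess : IntervalIntegrable (fun u => max (VaR X u - c) 0) volume 0 α := by
    have := hVaR.sub (intervalIntegrable_const (c := c))
    rw [intervalIntegrable_iff] at this ⊢
    exact this.pos_part
  have htail : ∫ u in Ioc 0 α, max (VaR X u - c) 0 ≤ ∫ ω, max (-X ω - c) 0 := by
    refine integral_le_integral_of_measure_lt_le
      ((intervalIntegrable_iff_integrableOn_Ioc_of_le hα0).mp hexcess).aemeasurable
      (ae_of_all _ fun _ => le_max_right _ _) (hX.neg.sub (integrable_const c)).pos_part
      (ae_of_all _ fun _ => le_max_right _ _) fun t ht => ?_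
    have hmax : ∀ a : ℝ, t < max a 0 ↔ t < a := fun a => by simp [not_lt.mpr ht.le]
    simp only [hmax]
    rw [Measure.restrict_apply' measurableSet_Ioc]
    calc volume ({u | t < VaR X u - c} ∩ Ioc 0 α)
        = volume ({u | c + t < VaR X u} ∩ Ioc 0 α) := by simp only [lt_sub_iff_add_lt']
      _ ≤ ℙ {ω | X ω < -(c + t)} := volume_setOf_lt_VaR_inter_Ioc_le X hα1 _
      _ ≤ ℙ {ω | t < -X ω - c} := measure_mono fun ω (h : X ω < -(c + t)) => by
          show t < -X ω - c; linarith
  calc ∫ u in (0 : ℝ)..α, VaR X u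
      ≤ ∫ u in (0 : ℝ)..α, (c + max (VaR X u - c) 0) :=
        intervalIntegral.integral_mono_on hα0 hVaR (intervalIntegrable_const.add hexcess)
          fun u _ => by linarith [le_max_left (VaR X u - c) 0]
    _ = α * c + ∫ u in Ioc 0 α, max (VaR X u - c) 0 := by
      rw [intervalIntegral.integral_add intervalIntegrable_const hexcess,
        intervalIntegral.integral_const, intervalIntegral.integral_of_le hα0, sub_zero, smul_eq_mul]
    _ ≤ α * c + ∫ ω, max (-X ω - c) 0 := by linarith

theorem ES_le_mul_sqrt_div {σ α : ℝ} (hX : MemLp X 2 ℙ) (hmean : ∫ ω, X ω = 0) (hσ : 0 ≤ σ)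
    (hvar : variance X ℙ = σ ^ 2) (hα : α ∈ Ioo 0 1) :
    ES X α ≤ σ * √(α - α ^ 2) / α := by
  by_cases hVaR : IntervalIntegrable (VaR X) volume 0 α
  swap
  · rw [ES, intervalIntegral.integral_undef hVaR, mul_zero]
    exact div_nonneg (mul_nonneg hσ (Real.sqrt_nonneg _)) hα.1.le
  obtain ⟨c, hc⟩ := exists_mul_add_sqrt_sub_eq hσ hα
  have hZ : MemLp (fun ω => -X ω - c) 2 ℙ := hX.neg.sub (memLp_const c)
  have hmeanZ : ∫ ω, (-X ω - c) = -c := by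
    rw [integral_sub (f := fun ω => -X ω) (hX.integrable one_le_two).neg (integrable_const c),
      integral_neg, hmean, integral_const, probReal_univ, one_smul, neg_zero, zero_sub]
  have hsqZ : ∫ ω, (-X ω - c) ^ 2 = σ ^ 2 + c ^ 2 := by
    have h := variance_eq_sub hZ
    rw [variance_sub_const (X := fun ω => -X ω) hX.1.neg, variance_fun_neg, hvar, hmeanZ] at h
    simp only [Pi.pow_apply] at h
    linarith
  have hexcess := integral_max_zero_le hZ
  rw [hmeanZ, hsqZ] at hexcess
  rw [ES, one_div, inv_mul_eq_div, div_le_div_iff_of_pos_right hα.1, ← hc]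
  linarith [integral_VaR_le_mul_add_integral_max X hα.1.le hα.2 hVaR (hX.integrable one_le_two) c]

end Quantile

/-- If `E[X] = 0` and `Var(X) = σ² > 0`, then for `α ∈ (0,1)`,
`ES_α(X) ≤ 2σ / √α`. -/
theorem es_le_cantelli_bound {Ω : Type*} [MeasureSpace Ω]
    [IsProbabilityMeasure (ℙ : Measure Ω)]
    (X : Ω → ℝ) (hX : MemLp X 2 ℙ)
    (hmean : ∫ ω, X ω = 0)
    (σ : ℝ) (hσ : 0 < σ) (hvar : variance X ℙ = σ ^ 2)
    (α : ℝ) (hα : α ∈ Set.Ioo (0 : ℝ) 1) :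
    ES X α ≤ (σ / α) * (Real.sqrt (α - α ^ 2) + Real.arctan (Real.sqrt ((1 - α) / α))) := by
  have harctan : 0 ≤ Real.arctan (Real.sqrt ((1 - α) / α)) :=
    Real.arctan_nonneg.mpr (Real.sqrt_nonneg _)
  calc ES X α ≤ σ * √(α - α ^ 2) / α := ES_le_mul_sqrt_div X hX hmean hσ.le hvar hα
    _ = (σ / α) * √(α - α ^ 2) := by ring
    _ ≤ _ := mul_le_mul_of_nonneg_left (by linarith) (div_nonneg hσ.le hα.1.le)
end

section
/- Let ρ be a risk measure (positively homogeneous and translation invariant), let μ∈ℝ and σ>0, and let 𝓛 be a set of random variables each having mean μ and standard deviation σ, with X₀∈𝓛. Write X̃ = (X-μ)/σ for the standardized version of X and 𝓛̃ = {X̃ : X∈𝓛}. If ρ̄(𝓛) and ρ_(𝓛) are finite with ρ_(𝓛)≠ρ̄(𝓛) and ρ(X₀)>0, ρ(X̃₀)>0, then RM(X₀,𝓛) = RM(X̃₀,𝓛̃). -/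
open MeasureTheory ProbabilityTheory

/-! A positively homogeneous, translation invariant `ρ` turns the standardization
`X ↦ (X - μ)/σ` into the increasing affine map `r ↦ σ⁻¹ r + μ/σ` of risk values. Such a map
carries the supremum and infimum of `ρ` over `𝓛` to those over `𝓛̃`, and the ratio defining the
relative measure of model risk is invariant under increasing affine maps. -/

/-- `RM(X₀, 𝓛) = relModelRisk (ρ '' 𝓛) (ρ X₀)`. -/
noncomputable def relModelRisk (s : Set ℝ) (x : ℝ) : ℝ :=
  (sSup s - x) / (sSup s - sInf s)

theorem relModelRisk_image_affine {s : Set ℝ} (hs : s.Nonempty) (hba : BddAbove s) (hbb : BddBelow s)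
    {a : ℝ} (ha : 0 < a) (b x : ℝ) :
    relModelRisk ((fun r => a * r + b) '' s) (a * x + b) = relModelRisk s x := by
  have hmono : Monotone fun r : ℝ => a * r + b := fun _ _ h => by
    dsimp only; gcongr
  have hcont : Continuous fun r : ℝ => a * r + b := by fun_prop
  have hsup := hmono.map_csSup_of_continuousAt hcont.continuousAt hs hba
  have hinf := hmono.map_csInf_of_continuousAt hcont.continuousAt hs hbb
  unfold relModelRisk
  rw [← hsup, ← hinf, add_sub_add_right_eq_sub, add_sub_add_right_eq_sub, ← mul_sub, ← mul_sub,
    mul_div_mul_left _ _ ha.ne']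

theorem risk_standardize {α : Type*} {ρ : (α → ℝ) → ℝ}
    (hhom : ∀ a : ℝ, 0 ≤ a → ∀ X : α → ℝ, ρ (fun ω => a * X ω) = a * ρ X)
    (htrans : ∀ b : ℝ, ∀ X : α → ℝ, ρ (fun ω => X ω + b) = ρ X - b)
    {σ : ℝ} (hσ : 0 ≤ σ) (μ : ℝ) (X : α → ℝ) :
    ρ (fun ω => (X ω - μ) / σ) = σ⁻¹ * ρ X + μ / σ := by
  have hX : (fun ω => (X ω - μ) / σ) = fun ω => σ⁻¹ * X ω + -(μ / σ) := by
    funext ω; ring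
  rw [hX, htrans, hhom _ (inv_nonneg.mpr hσ)]
  ring

theorem relative_measure_standardization_general {Ω : Type*}
    (ρ : (Ω → ℝ) → ℝ)
    (hhom : ∀ a : ℝ, 0 ≤ a → ∀ X : Ω → ℝ, ρ (fun ω => a * X ω) = a * ρ X)
    (htrans : ∀ b : ℝ, ∀ X : Ω → ℝ, ρ (fun ω => X ω + b) = ρ X - b)
    (μ σ : ℝ) (hσ : 0 < σ)
    (L : Set (Ω → ℝ))
    (X₀ : Ω → ℝ) (hX₀ : X₀ ∈ L)
    (hba : BddAbove (ρ '' L)) (hbb : BddBelow (ρ '' L)) :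
    (sSup (ρ '' L) - ρ X₀) / (sSup (ρ '' L) - sInf (ρ '' L)) =
      (sSup (ρ '' ((fun X : Ω → ℝ => fun ω => (X ω - μ) / σ) '' L)) -
          ρ (fun ω => (X₀ ω - μ) / σ)) /
        (sSup (ρ '' ((fun X : Ω → ℝ => fun ω => (X ω - μ) / σ) '' L)) -
          sInf (ρ '' ((fun X : Ω → ℝ => fun ω => (X ω - μ) / σ) '' L))) := by
  have hstd := risk_standardize hhom htrans hσ.le μ
  have himage : ρ '' ((fun X : Ω → ℝ => fun ω => (X ω - μ) / σ) '' L) =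
      (fun r => σ⁻¹ * r + μ / σ) '' (ρ '' L) := by
    rw [Set.image_image, Set.image_image]
    exact Set.image_congr' hstd
  change relModelRisk (ρ '' L) (ρ X₀) = relModelRisk _ _
  rw [himage, hstd, relModelRisk_image_affine ⟨_, Set.mem_image_of_mem ρ hX₀⟩ hba hbb (inv_pos.mpr hσ)]

/-- If `ρ` is a positively homogeneous and translation invariant risk measure,
`𝓛` a set of random variables each with mean `μ` and standard deviation `σ`,
`X₀ ∈ 𝓛`, the extremal values of `ρ` over `𝓛` are finite and distinct, and
`ρ(X₀) > 0`, `ρ(X̃₀) > 0`, then the relative measure of model risk satisfies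
`RM(X₀, 𝓛) = RM(X̃₀, 𝓛̃)`, where `X̃ = (X - μ)/σ` is the standardized version. -/
theorem relative_measure_standardization {Ω : Type*} [MeasureSpace Ω]
    [IsProbabilityMeasure (ℙ : Measure Ω)]
    (ρ : (Ω → ℝ) → ℝ)
    (hhom : ∀ a : ℝ, 0 ≤ a → ∀ X : Ω → ℝ, ρ (fun ω => a * X ω) = a * ρ X)
    (htrans : ∀ b : ℝ, ∀ X : Ω → ℝ, ρ (fun ω => X ω + b) = ρ X - b)
    (μ σ : ℝ) (hσ : 0 < σ)
    (L : Set (Ω → ℝ))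
    (hmean : ∀ X ∈ L, ∫ ω, X ω = μ)
    (hstd : ∀ X ∈ L, variance X ℙ = σ ^ 2)
    (X₀ : Ω → ℝ) (hX₀ : X₀ ∈ L)
    (hba : BddAbove (ρ '' L)) (hbb : BddBelow (ρ '' L))
    (hne : sInf (ρ '' L) ≠ sSup (ρ '' L))
    (hpos : 0 < ρ X₀) (hpos' : 0 < ρ (fun ω => (X₀ ω - μ) / σ)) :
    (sSup (ρ '' L) - ρ X₀) / (sSup (ρ '' L) - sInf (ρ '' L)) =
      (sSup (ρ '' ((fun X : Ω → ℝ => fun ω => (X ω - μ) / σ) '' L)) -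
          ρ (fun ω => (X₀ ω - μ) / σ)) /
        (sSup (ρ '' ((fun X : Ω → ℝ => fun ω => (X ω - μ) / σ) '' L)) -
          sInf (ρ '' ((fun X : Ω → ℝ => fun ω => (X ω - μ) / σ) '' L))) :=
  relative_measure_standardization_general ρ hhom htrans μ σ hσ L X₀ hX₀ hba hbb
end

section
/- (Chebyshev–Markov extremal distributions) Let 𝓛₀₁ be the set of all Borel probability measures on ℝ with mean 0 and variance 1. Then for every x ≤ 0, sup_{μ∈𝓛₀₁} μ((-∞,x]) = 1/(1+x²), and for every x ≥ 0, inf_{μ∈𝓛₀₁} μ((-∞,x]) = x²/(1+x²). Moreover sup_{μ∈𝓛₀₁} μ((-∞,x]) = 1 for x ≥ 0 and inf_{μ∈𝓛₀₁} μ((-∞,x]) = 0 for x ≤ 0. -/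
/-!
Writing `a = 1 / x`, Markov's inequality for `(X + a) ^ 2`, whose mean is `1 + a ^ 2` for a
standard `X`, is Cantelli's inequality: `P(X ≤ x) ≤ 1 / (1 + x ^ 2)` for `x < 0` and
`P(X > x) ≤ 1 / (1 + x ^ 2)` for `x > 0`. These bounds are sharp: the standard law with atoms
`-1 / b` and `b` of weights `b ^ 2 / (1 + b ^ 2)` and `1 / (1 + b ^ 2)` has distribution function
`b ^ 2 / (1 + b ^ 2)` on `[-1 / b, b)`, which equals `1 / (1 + x ^ 2)` at `x = -1 / b` and tends
to `x ^ 2 / (1 + x ^ 2)` as `b ↓ x`. The two remaining extremal values follow from the cases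
`x = 0`, since the supremum and the infimum of the distribution functions are monotone in `x`.
-/

open MeasureTheory Set Filter Topology
open scoped ENNReal

/-- The set of all Borel probability measures on ℝ with mean 0 and variance 1. -/
def stdMeasures : Set (Measure ℝ) :=
  {μ | IsProbabilityMeasure μ ∧ (∫ x, x ∂μ) = 0 ∧ (∫ x, x ^ 2 ∂μ) = 1}

/-- The distribution function of a measure: `F_μ(x) = μ((-∞, x])`. -/
noncomputable def distFun (μ : Measure ℝ) (x : ℝ) : ℝ := (μ (Iic x)).toReal

lemma distFun_nonneg (μ : Measure ℝ) (x : ℝ) : 0 ≤ distFun μ x := ENNReal.toReal_nonneg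

lemma distFun_le_one (μ : Measure ℝ) [IsProbabilityMeasure μ] (x : ℝ) : distFun μ x ≤ 1 :=
  measureReal_le_one

lemma distFun_mono (μ : Measure ℝ) [IsFiniteMeasure μ] : Monotone (distFun μ) :=
  fun _ _ hxy => measureReal_mono (Iic_subset_Iic.mpr hxy)

lemma sSup_image_distFun_mono {S : Set (Measure ℝ)} (hS : ∀ μ ∈ S, IsProbabilityMeasure μ)
    {x y : ℝ} (hxy : x ≤ y) :
    sSup ((fun μ => distFun μ x) '' S) ≤ sSup ((fun μ => distFun μ y) '' S) := by
  rw [sSup_image', sSup_image']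
  refine ciSup_mono ⟨1, ?_⟩ fun μ => ?_
  · rintro _ ⟨μ, rfl⟩
    have := hS μ.1 μ.2
    exact distFun_le_one _ _
  · have := hS μ.1 μ.2
    exact distFun_mono _ hxy

lemma sInf_image_distFun_mono {S : Set (Measure ℝ)} (hS : ∀ μ ∈ S, IsFiniteMeasure μ)
    {x y : ℝ} (hxy : x ≤ y) :
    sInf ((fun μ => distFun μ x) '' S) ≤ sInf ((fun μ => distFun μ y) '' S) := by
  rw [sInf_image', sInf_image']
  refine ciInf_mono ⟨0, ?_⟩ fun μ => ?_
  · rintro _ ⟨μ, rfl⟩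
    exact distFun_nonneg _ _
  · have := hS μ.1 μ.2
    exact distFun_mono _ hxy

section Cantelli

variable {μ : Measure ℝ}

lemma integrable_sq_of_mem_stdMeasures (hμ : μ ∈ stdMeasures) : Integrable (fun y => y ^ 2) μ := by
  by_contra h
  have := hμ.2.2
  rw [integral_undef h] at this
  exact zero_ne_one this

lemma memLp_two_of_mem_stdMeasures (hμ : μ ∈ stdMeasures) : MemLp (fun y => y) 2 μ :=
  (memLp_two_iff_integrable_sq aestronglyMeasurable_id).mpr (integrable_sq_of_mem_stdMeasures hμ)

lemma integral_add_const_sq_of_mem_stdMeasures (hμ : μ ∈ stdMeasures) (c : ℝ) :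
    ∫ y, (y + c) ^ 2 ∂μ = 1 + c ^ 2 := by
  obtain ⟨hprob, hmean, hvar⟩ := hμ
  have hlin : Integrable (fun y => 2 * c * y) μ :=
    ((memLp_two_of_mem_stdMeasures ⟨hprob, hmean, hvar⟩).integrable one_le_two).const_mul _
  have haffine : Integrable (fun y => 2 * c * y + c ^ 2) μ := hlin.add (integrable_const _)
  calc ∫ y, (y + c) ^ 2 ∂μ = ∫ y, (y ^ 2 + (2 * c * y + c ^ 2)) ∂μ := by congr 1; ext y; ring
    _ = 1 + c ^ 2 := by
      rw [integral_add (integrable_sq_of_mem_stdMeasures ⟨hprob, hmean, hvar⟩) haffine,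
        integral_add hlin (integrable_const _), integral_const_mul, hmean, hvar]
      simp

lemma measureReal_le_of_forall_le_add_const_sq (hμ : μ ∈ stdMeasures) {c t : ℝ} (ht : 0 < t)
    {S : Set ℝ} (hS : ∀ y ∈ S, t ≤ (y + c) ^ 2) : μ.real S ≤ (1 + c ^ 2) / t := by
  have := hμ.1
  have hmarkov := mul_meas_ge_le_integral_of_nonneg (ae_of_all μ fun y => sq_nonneg (y + c))
    ((memLp_two_of_mem_stdMeasures hμ).add (memLp_const c)).integrable_sq t
  rw [integral_add_const_sq_of_mem_stdMeasures hμ c] at hmarkov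
  rw [le_div_iff₀ ht, mul_comm]
  exact (mul_le_mul_of_nonneg_left (measureReal_mono hS) ht.le).trans hmarkov

lemma one_add_inv_sq_div_add_inv_sq {x : ℝ} (hx : x ≠ 0) :
    (1 + (1 / x) ^ 2) / (x + 1 / x) ^ 2 = 1 / (1 + x ^ 2) := by
  field_simp
  ring

lemma distFun_le_of_neg (hμ : μ ∈ stdMeasures) {x : ℝ} (hx : x < 0) :
    distFun μ x ≤ 1 / (1 + x ^ 2) := by
  have hinv : 1 / x < 0 := one_div_neg.mpr hx
  have hcantelli := measureReal_le_of_forall_le_add_const_sq hμ (c := 1 / x) (S := Iic x)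
    (by nlinarith : (0 : ℝ) < (x + 1 / x) ^ 2) fun y (hy : y ≤ x) => by nlinarith
  rwa [one_add_inv_sq_div_add_inv_sq hx.ne] at hcantelli

lemma le_distFun_of_pos (hμ : μ ∈ stdMeasures) {x : ℝ} (hx : 0 < x) :
    x ^ 2 / (1 + x ^ 2) ≤ distFun μ x := by
  have := hμ.1
  have hinv : 0 < 1 / x := one_div_pos.mpr hx
  have hcantelli := measureReal_le_of_forall_le_add_const_sq hμ (c := 1 / x) (S := Ioi x)
    (by nlinarith : (0 : ℝ) < (x + 1 / x) ^ 2) fun y (hy : x < y) => by nlinarith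
  rw [one_add_inv_sq_div_add_inv_sq hx.ne'] at hcantelli
  have hcompl : distFun μ x = 1 - μ.real (Ioi x) := by
    rw [← probReal_compl_eq_one_sub measurableSet_Ioi, compl_Ioi]; rfl
  have hsplit : x ^ 2 / (1 + x ^ 2) = 1 - 1 / (1 + x ^ 2) := by field_simp; ring
  linarith

end Cantelli

noncomputable def twoPointMeasure (b : ℝ) : Measure ℝ :=
  ENNReal.ofReal (b ^ 2 / (1 + b ^ 2)) • Measure.dirac (-1 / b) +
    ENNReal.ofReal (1 / (1 + b ^ 2)) • Measure.dirac b

lemma integral_twoPointMeasure (b : ℝ) (f : ℝ → ℝ) :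
    ∫ y, f y ∂twoPointMeasure b = b ^ 2 / (1 + b ^ 2) * f (-1 / b) + 1 / (1 + b ^ 2) * f b := by
  have hdirac (a : ℝ) (w : ℝ≥0∞) (hw : w ≠ ⊤) : Integrable f (w • Measure.dirac a) :=
    ((integrable_const (f a)).congr (ae_eq_dirac f).symm).smul_measure hw
  rw [twoPointMeasure, integral_add_measure (hdirac _ _ ENNReal.ofReal_ne_top)
    (hdirac _ _ ENNReal.ofReal_ne_top), integral_smul_measure, integral_smul_measure,
    integral_dirac, integral_dirac, ENNReal.toReal_ofReal (by positivity),
    ENNReal.toReal_ofReal (by positivity), smul_eq_mul, smul_eq_mul]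

lemma isProbabilityMeasure_twoPointMeasure (b : ℝ) : IsProbabilityMeasure (twoPointMeasure b) := by
  constructor
  simp only [twoPointMeasure, Measure.add_apply, Measure.smul_apply, measure_univ, smul_eq_mul,
    mul_one]
  rw [← ENNReal.ofReal_add (by positivity) (by positivity), ← ENNReal.ofReal_one]
  congr 1
  field_simp
  ring

lemma twoPointMeasure_mem_stdMeasures {b : ℝ} (hb : b ≠ 0) : twoPointMeasure b ∈ stdMeasures := by
  refine ⟨isProbabilityMeasure_twoPointMeasure b, ?_, ?_⟩ <;> rw [integral_twoPointMeasure]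
  · field_simp
    ring
  · field_simp

lemma distFun_twoPointMeasure {b x : ℝ} (hleft : -1 / b ≤ x) (hright : x < b) :
    distFun (twoPointMeasure b) x = b ^ 2 / (1 + b ^ 2) := by
  simp [distFun, twoPointMeasure, Measure.dirac_apply' _ measurableSet_Iic, hleft,
    not_le.mpr hright, ENNReal.toReal_ofReal (by positivity : 0 ≤ b ^ 2 / (1 + b ^ 2))]

lemma sq_div_one_add_sq_mem_image_distFun {b x : ℝ} (hleft : -1 / b ≤ x) (hright : x < b) :
    b ^ 2 / (1 + b ^ 2) ∈ (fun μ => distFun μ x) '' stdMeasures := by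
  have hb : b ≠ 0 := by
    rintro rfl
    simp only [div_zero] at hleft
    linarith
  exact ⟨_, twoPointMeasure_mem_stdMeasures hb, distFun_twoPointMeasure hleft hright⟩

lemma image_distFun_nonempty (x : ℝ) : ((fun μ => distFun μ x) '' stdMeasures).Nonempty :=
  ⟨_, _, twoPointMeasure_mem_stdMeasures one_ne_zero, rfl⟩

lemma mem_closure_image_distFun {l : Filter ℝ} [l.NeBot] {x c : ℝ}
    (hc : Tendsto (fun b => b ^ 2 / (1 + b ^ 2)) l (𝓝 c))
    (hl : ∀ᶠ b in l, -1 / b ≤ x ∧ x < b) :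
    c ∈ closure ((fun μ => distFun μ x) '' stdMeasures) :=
  mem_closure_of_tendsto hc (hl.mono fun _ hb => sq_div_one_add_sq_mem_image_distFun hb.1 hb.2)

lemma continuous_sq_div_one_add_sq : Continuous fun b : ℝ => b ^ 2 / (1 + b ^ 2) :=
  (continuous_pow 2).div (by fun_prop) fun b => by positivity

lemma tendsto_sq_div_one_add_sq_atTop : Tendsto (fun b : ℝ => b ^ 2 / (1 + b ^ 2)) atTop (𝓝 1) := by
  have hinv : Tendsto (fun b : ℝ => (1 + b ^ 2)⁻¹) atTop (𝓝 0) :=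
    tendsto_inv_atTop_zero.comp (tendsto_atTop_add_const_left _ 1 (tendsto_pow_atTop two_ne_zero))
  convert hinv.const_sub 1 using 2 with b
  · field_simp
    ring
  · simp

lemma isLUB_image_distFun_of_nonpos {x : ℝ} (hx : x ≤ 0) :
    IsLUB ((fun μ => distFun μ x) '' stdMeasures) (1 / (1 + x ^ 2)) := by
  rcases hx.lt_or_eq with hx | rfl
  · refine isLUB_of_mem_closure ?_ (subset_closure ?_)
    · rintro _ ⟨μ, hμ, rfl⟩
      exact distFun_le_of_neg hμ hx
    · have hx0 : x ≠ 0 := hx.ne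
      have hinv : 0 < -1 / x := div_pos_of_neg_of_neg neg_one_lt_zero hx
      convert sq_div_one_add_sq_mem_image_distFun (b := -1 / x) (by field_simp; rfl)
        (hx.trans hinv) using 1
      field_simp
      ring
  · refine isLUB_of_mem_closure ?_ ?_
    · rintro _ ⟨μ, hμ, rfl⟩
      have := hμ.1
      simpa using distFun_le_one μ 0
    · simpa using mem_closure_image_distFun tendsto_sq_div_one_add_sq_atTop
        ((eventually_gt_atTop 0).mono fun b hb =>
          ⟨(div_neg_of_neg_of_pos neg_one_lt_zero hb).le, hb⟩)

lemma isGLB_image_distFun_of_nonneg {x : ℝ} (hx : 0 ≤ x) :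
    IsGLB ((fun μ => distFun μ x) '' stdMeasures) (x ^ 2 / (1 + x ^ 2)) := by
  refine isGLB_of_mem_closure ?_ ?_
  · rintro _ ⟨μ, hμ, rfl⟩
    rcases hx.lt_or_eq with hx | rfl
    · exact le_distFun_of_pos hμ hx
    · simpa using distFun_nonneg μ 0
  · refine mem_closure_image_distFun (l := 𝓝[>] x)
      ((continuous_sq_div_one_add_sq.tendsto x).mono_left nhdsWithin_le_nhds) ?_
    filter_upwards [self_mem_nhdsWithin] with b (hb : x < b)
    exact ⟨(div_neg_of_neg_of_pos neg_one_lt_zero (hx.trans_lt hb)).le.trans hx, hb⟩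

/-- Chebyshev–Markov extremal distributions for the class of standard
probability measures on ℝ: for `x ≤ 0`, `sup_μ F_μ(x) = 1/(1+x²)` and
`inf_μ F_μ(x) = 0`; for `x ≥ 0`, `inf_μ F_μ(x) = x²/(1+x²)` and
`sup_μ F_μ(x) = 1`. -/
theorem chebyshev_markov_extremal_distributions :
    (∀ x : ℝ, x ≤ 0 →
      sSup ((fun μ : Measure ℝ => distFun μ x) '' stdMeasures) = 1 / (1 + x ^ 2)) ∧
    (∀ x : ℝ, 0 ≤ x →
      sInf ((fun μ : Measure ℝ => distFun μ x) '' stdMeasures) = x ^ 2 / (1 + x ^ 2)) ∧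
    (∀ x : ℝ, 0 ≤ x →
      sSup ((fun μ : Measure ℝ => distFun μ x) '' stdMeasures) = 1) ∧
    (∀ x : ℝ, x ≤ 0 →
      sInf ((fun μ : Measure ℝ => distFun μ x) '' stdMeasures) = 0) := by
  have hsup (x : ℝ) (hx : x ≤ 0) :=
    (isLUB_image_distFun_of_nonpos hx).csSup_eq (image_distFun_nonempty x)
  have hinf (x : ℝ) (hx : 0 ≤ x) :=
    (isGLB_image_distFun_of_nonneg hx).csInf_eq (image_distFun_nonempty x)
  refine ⟨hsup, hinf, fun x hx => le_antisymm ?_ ?_, fun x hx => le_antisymm ?_ ?_⟩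
  · refine csSup_le (image_distFun_nonempty x) ?_
    rintro _ ⟨μ, hμ, rfl⟩
    have := hμ.1
    exact distFun_le_one μ x
  · simpa [hsup 0 le_rfl] using sSup_image_distFun_mono (fun μ (hμ : μ ∈ stdMeasures) => hμ.1) hx
  · simpa [hinf 0 le_rfl] using
      sInf_image_distFun_mono (fun μ (hμ : μ ∈ stdMeasures) => have := hμ.1; inferInstance) hx
  · refine le_csInf (image_distFun_nonempty x) ?_
    rintro _ ⟨μ, -, rfl⟩
    exact distFun_nonneg μ x
end

section
/- Let ρ be a risk measure (positively homogeneous and translation invariant), X₀ a random variable and 𝓛 a set of random variables with X₀∈𝓛, such that ρ̄(𝓛) and ρ_(𝓛) are finite with ρ_(𝓛)≠ρ̄(𝓛). Then for every a>0 and b∈ℝ, RM(aX₀+b, a𝓛+b) = RM(X₀,𝓛), where a𝓛+b = {aX+b : X∈𝓛}. -/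
lemma aff_sSup (a b : ℝ) (ha : 0 < a) (S : Set ℝ) (hS : S.Nonempty) (hb : BddAbove S) :
    sSup ((fun x => a * x - b) '' S) = a * sSup S - b := by
  have h := isLUB_csSup hS hb
  have hl : IsLUB ((fun x => a * x - b) '' S) (a * sSup S - b) := by
    constructor
    · rintro y ⟨x, hx, rfl⟩
      have := h.1 hx
      show a * x - b ≤ _
      nlinarith
    · intro y hy
      have hle : sSup S ≤ (y + b) / a := by
        apply h.2
        intro x hx
        have := hy ⟨x, hx, rfl⟩
        rw [le_div_iff₀ ha]
        simp only at this
        linarith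
      have : a * sSup S ≤ a * ((y + b) / a) := by nlinarith
      rw [mul_div_cancel₀ _ ha.ne'] at this
      linarith
  exact hl.csSup_eq (hS.image _)

lemma aff_sInf (a b : ℝ) (ha : 0 < a) (S : Set ℝ) (hS : S.Nonempty) (hb : BddBelow S) :
    sInf ((fun x => a * x - b) '' S) = a * sInf S - b := by
  have h := isGLB_csInf hS hb
  have hl : IsGLB ((fun x => a * x - b) '' S) (a * sInf S - b) := by
    constructor
    · rintro y ⟨x, hx, rfl⟩
      have := h.1 hx
      show _ ≤ a * x - b
      nlinarith
    · intro y hy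
      have hle : (y + b) / a ≤ sInf S := by
        apply h.2
        intro x hx
        have := hy ⟨x, hx, rfl⟩
        rw [div_le_iff₀ ha]
        simp only at this
        linarith
      have : a * ((y + b) / a) ≤ a * sInf S := by nlinarith
      rw [mul_div_cancel₀ _ ha.ne'] at this
      linarith
  exact hl.csInf_eq (hS.image _)

/-- For a positively homogeneous and translation invariant risk measure `ρ`,
a reference random variable `X₀ ∈ 𝓛` with finite, distinct extremal values of
`ρ` over `𝓛`, the relative measure of model risk is invariant under affine
transformations: `RM(aX₀ + b, a𝓛 + b) = RM(X₀, 𝓛)` for `a > 0`, `b ∈ ℝ`. -/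
theorem relative_measure_affine_invariant {Ω : Type*}
    (ρ : (Ω → ℝ) → ℝ)
    (hhom : ∀ a : ℝ, 0 ≤ a → ∀ X : Ω → ℝ, ρ (fun ω => a * X ω) = a * ρ X)
    (htrans : ∀ b : ℝ, ∀ X : Ω → ℝ, ρ (fun ω => X ω + b) = ρ X - b)
    (L : Set (Ω → ℝ)) (X₀ : Ω → ℝ) (hX₀ : X₀ ∈ L)
    (hba : BddAbove (ρ '' L)) (hbb : BddBelow (ρ '' L))
    (hne : sInf (ρ '' L) ≠ sSup (ρ '' L))
    (a : ℝ) (ha : 0 < a) (b : ℝ) :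
    (sSup (ρ '' ((fun X : Ω → ℝ => fun ω => a * X ω + b) '' L)) -
        ρ (fun ω => a * X₀ ω + b)) /
      (sSup (ρ '' ((fun X : Ω → ℝ => fun ω => a * X ω + b) '' L)) -
        sInf (ρ '' ((fun X : Ω → ℝ => fun ω => a * X ω + b) '' L))) =
    (sSup (ρ '' L) - ρ X₀) / (sSup (ρ '' L) - sInf (ρ '' L)) := by
  have key : ∀ X : Ω → ℝ, ρ (fun ω => a * X ω + b) = a * ρ X - b := by
    intro X
    rw [htrans b (fun ω => a * X ω), hhom a ha.le X]
  have himg : ρ '' ((fun X : Ω → ℝ => fun ω => a * X ω + b) '' L)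
      = (fun x => a * x - b) '' (ρ '' L) := by
    rw [Set.image_image, Set.image_image]
    exact Set.image_congr fun X _ => key X
  have hSne : (ρ '' L).Nonempty := ⟨ρ X₀, Set.mem_image_of_mem _ hX₀⟩
  rw [himg, aff_sSup a b ha _ hSne hba, aff_sInf a b ha _ hSne hbb, key X₀]
  have h1 : a * sSup (ρ '' L) - b - (a * ρ X₀ - b) = a * (sSup (ρ '' L) - ρ X₀) := by ring
  have h2 : a * sSup (ρ '' L) - b - (a * sInf (ρ '' L) - b)
      = a * (sSup (ρ '' L) - sInf (ρ '' L)) := by ring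
  rw [h1, h2, mul_div_mul_left _ _ ha.ne']
end
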